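/- arXiv:2602.14319 — 3 statements merged into one kernel-verified Lean document; each statement's English description precedes it below -/
import Mathlib

section
/- Let g = [a,b,c,r,s,t] be a primitive positive definite integral ternary quadratic form such that at least one of the cross coefficients r, s, t is odd (equivalently, f = 2g is a positive definite improperly primitive integral ternary quadratic form). Then the invariant I₁(g) is negative and odd, 16 divides the invariant I₂(g), and the reciprocal form F_g^B is properly primitive, i.e. its three cross coefficients are all even. -/
/-- An integral ternary quadratic form `[a,b,c,r,s,t]`, denoting
`a*x² + b*y² + c*z² + r*y*z + s*x*z + t*x*y`. -/
structure TernaryQF where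
  a : ℤ
  b : ℤ
  c : ℤ
  r : ℤ
  s : ℤ
  t : ℤ

namespace TernaryQF

def eval (f : TernaryQF) (x y z : ℤ) : ℤ :=
  f.a * x ^ 2 + f.b * y ^ 2 + f.c * z ^ 2 + f.r * y * z + f.s * x * z + f.t * x * y

/-- The content: the gcd of the six coefficients. -/
def content (f : TernaryQF) : ℤ :=
  (Int.gcd (Int.gcd (Int.gcd (Int.gcd (Int.gcd f.a f.b) f.c) f.r) f.s) f.t : ℤ)

def Primitive (f : TernaryQF) : Prop := f.content = 1

def PosDef (f : TernaryQF) : Prop :=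
  ∀ x y z : ℤ, ¬(x = 0 ∧ y = 0 ∧ z = 0) → 0 < f.eval x y z

/-- The adjoint form: the form whose coefficient matrix is `-2 · adjugate(M(f))`,
written out explicitly. -/
def adj (f : TernaryQF) : TernaryQF :=
  ⟨f.r ^ 2 - 4 * f.b * f.c,
   f.s ^ 2 - 4 * f.a * f.c,
   f.t ^ 2 - 4 * f.a * f.b,
   4 * f.a * f.r - 2 * f.s * f.t,
   4 * f.b * f.s - 2 * f.t * f.r,
   4 * f.c * f.t - 2 * f.r * f.s⟩

/-- The basic invariant `I₁(f) = -content(adj f)`. -/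
def I₁ (f : TernaryQF) : ℤ := -f.adj.content

/-- Componentwise division of the coefficients by an integer. -/
def sdiv (f : TernaryQF) (d : ℤ) : TernaryQF :=
  ⟨f.a / d, f.b / d, f.c / d, f.r / d, f.s / d, f.t / d⟩

/-- The Brandt reciprocal form `F_f^B = adj(f) / I₁(f)`. -/
def FB (f : TernaryQF) : TernaryQF := f.adj.sdiv f.I₁

/-- The basic invariant `I₂(f) = I₁(F_f^B)`. -/
def I₂ (f : TernaryQF) : ℤ := f.FB.I₁

end TernaryQF

/-!
Let `Ω` be the content of `adj g`, so that `I₁(g) = -Ω` and `adj g = I₁(g) · F` with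
`F = F_g^B`; taking contents shows that `F` is primitive. The diagonal coefficients
`r² - 4bc, s² - 4ac, t² - 4ab` of `adj g` can all be even only if `r, s, t` are, so `Ω` is
odd. The cross coefficients of `adj g` are even, hence so are those of `F`. Finally `adj` is
quadratic and `adj (adj g) = 16 · disc(g) · g`, so `I₁(g)² · adj F = 16 · disc(g) · g`, and
since `I₁(g)` is odd, `16` divides the content of `adj F`, which is `-I₂(g)`.
-/

theorem Int.gcd_abs_mul_mul (k m c : ℤ) :
    Int.gcd (|k| * m) (k * c) = k.natAbs * Int.gcd m c := by
  rw [Int.gcd_eq_natAbs_gcd_natAbs, Int.gcd_eq_natAbs_gcd_natAbs, Int.natAbs_mul, Int.natAbs_mul,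
    Int.natAbs_abs, Nat.gcd_mul_left]

theorem Int.even_of_two_dvd_sq_sub_four_mul {x y : ℤ} (h : 2 ∣ x ^ 2 - 4 * y) : Even x := by
  have : 2 ∣ x ^ 2 := by simpa using h.add (Dvd.intro (2 * y) (by ring) : (2 : ℤ) ∣ 4 * y)
  exact (Int.even_pow.mp (even_iff_two_dvd.mpr this)).1

namespace TernaryQF

def smul (k : ℤ) (f : TernaryQF) : TernaryQF :=
  ⟨k * f.a, k * f.b, k * f.c, k * f.r, k * f.s, k * f.t⟩

def disc (f : TernaryQF) : ℤ :=
  -4 * f.a * f.b * f.c - f.r * f.s * f.t + f.a * f.r ^ 2 + f.b * f.s ^ 2 + f.c * f.t ^ 2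

theorem content_nonneg (f : TernaryQF) : 0 ≤ f.content := Int.natCast_nonneg _

theorem dvd_content_iff {f : TernaryQF} {d : ℤ} :
    d ∣ f.content ↔ d ∣ f.a ∧ d ∣ f.b ∧ d ∣ f.c ∧ d ∣ f.r ∧ d ∣ f.s ∧ d ∣ f.t := by
  simp only [content, Int.dvd_coe_gcd_iff, and_assoc]

theorem content_smul (k : ℤ) (f : TernaryQF) : (f.smul k).content = |k| * f.content := by
  simp [content, smul, Int.gcd_mul_left, Int.gcd_abs_mul_mul]

theorem smul_sdiv_cancel {f : TernaryQF} {d : ℤ} (hd : d ∣ f.content) : (f.sdiv d).smul d = f := by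
  obtain ⟨ha, hb, hc, hr, hs, ht⟩ := dvd_content_iff.mp hd
  simp only [smul, sdiv, Int.mul_ediv_cancel' ha, Int.mul_ediv_cancel' hb, Int.mul_ediv_cancel' hc,
    Int.mul_ediv_cancel' hr, Int.mul_ediv_cancel' hs, Int.mul_ediv_cancel' ht]

theorem adj_smul (k : ℤ) (f : TernaryQF) : (f.smul k).adj = f.adj.smul (k ^ 2) := by
  simp only [adj, smul, mk.injEq]
  refine ⟨?_, ?_, ?_, ?_, ?_, ?_⟩ <;> ring

/-- On coefficient matrices this is `adj (adj M) = det M • M` with `det M = -2 · disc f`,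
the factors `-2` in the definition of `adj` contributing the rest. -/
theorem adj_adj (f : TernaryQF) : f.adj.adj = f.smul (16 * f.disc) := by
  simp only [adj, smul, disc, mk.injEq]
  refine ⟨?_, ?_, ?_, ?_, ?_, ?_⟩ <;> ring

theorem odd_content_adj {f : TernaryQF} (h : Odd f.r ∨ Odd f.s ∨ Odd f.t) :
    Odd f.adj.content := by
  rw [← Int.not_even_iff_odd, even_iff_two_dvd, dvd_content_iff]
  rintro ⟨ha, hb, hc, -⟩
  rcases h with h | h | h <;> apply Int.not_even_iff_odd.mpr h
  · exact Int.even_of_two_dvd_sq_sub_four_mul (y := f.b * f.c)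
      (by simpa only [adj, mul_assoc] using ha)
  · exact Int.even_of_two_dvd_sq_sub_four_mul (y := f.a * f.c)
      (by simpa only [adj, mul_assoc] using hb)
  · exact Int.even_of_two_dvd_sq_sub_four_mul (y := f.a * f.b)
      (by simpa only [adj, mul_assoc] using hc)

theorem I₁_nonpos (f : TernaryQF) : f.I₁ ≤ 0 := neg_nonpos.mpr f.adj.content_nonneg

theorem I₁_smul_FB (f : TernaryQF) : f.FB.smul f.I₁ = f.adj :=
  smul_sdiv_cancel (neg_dvd.mpr dvd_rfl)

theorem primitive_FB {f : TernaryQF} (h : f.I₁ ≠ 0) : f.FB.Primitive := by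
  have key := congrArg content f.I₁_smul_FB
  rw [content_smul, I₁, abs_neg, abs_of_nonneg f.adj.content_nonneg] at key
  exact Int.eq_one_of_mul_eq_self_right (neg_ne_zero.mp h) key

theorem even_FB_cross {f : TernaryQF} (h : Odd f.I₁) :
    Even f.FB.r ∧ Even f.FB.s ∧ Even f.FB.t := by
  have key := f.I₁_smul_FB
  simp only [smul, adj, mk.injEq] at key
  obtain ⟨-, -, -, hr, hs, ht⟩ := key
  have cancel_odd : ∀ {x y : ℤ}, f.I₁ * x = y + y → Even x := fun hx =>
    (Int.even_mul.mp ⟨_, hx⟩).resolve_left (Int.not_even_iff_odd.mpr h)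
  exact ⟨cancel_odd (y := 2 * f.a * f.r - f.s * f.t) (hr.trans (by ring)),
    cancel_odd (y := 2 * f.b * f.s - f.t * f.r) (hs.trans (by ring)),
    cancel_odd (y := 2 * f.c * f.t - f.r * f.s) (ht.trans (by ring))⟩

theorem sixteen_dvd_I₂ {f : TernaryQF} (h : Odd f.I₁) : 16 ∣ f.I₂ := by
  have key := congrArg content (adj_smul f.I₁ f.FB)
  rw [I₁_smul_FB, adj_adj, content_smul, content_smul, abs_pow, sq_abs] at key
  have hcop : IsCoprime (16 : ℤ) (f.I₁ ^ 2) := by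
    simpa using (Int.isCoprime_two_left.mpr h).pow (m := 4) (n := 2)
  have h16 : 16 ∣ f.I₁ ^ 2 * f.FB.adj.content :=
    key ▸ dvd_mul_of_dvd_left ((dvd_abs _ _).mpr (dvd_mul_right 16 _)) _
  exact dvd_neg.mpr (hcop.dvd_of_dvd_mul_left h16)

end TernaryQF

theorem improperly_primitive_invariants_general
    (g : TernaryQF)
    (hodd : Odd g.r ∨ Odd g.s ∨ Odd g.t) :
    g.I₁ < 0 ∧ Odd g.I₁ ∧ (16 : ℤ) ∣ g.I₂ ∧
      g.FB.Primitive ∧ Even g.FB.r ∧ Even g.FB.s ∧ Even g.FB.t := by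
  have hI₁ : Odd g.I₁ := (TernaryQF.odd_content_adj hodd).neg
  have hne : g.I₁ ≠ 0 := by rintro h; simp [h] at hI₁
  exact ⟨g.I₁_nonpos.lt_of_ne hne, hI₁, TernaryQF.sixteen_dvd_I₂ hI₁,
    TernaryQF.primitive_FB hne, TernaryQF.even_FB_cross hI₁⟩

/-- If `g` is a primitive positive definite integral ternary quadratic form with at
least one odd cross coefficient (so that `f = 2g` is improperly primitive), then
`I₁(g)` is negative and odd, `16 ∣ I₂(g)`, and the reciprocal `F_g^B` is properly
primitive, i.e. primitive with all three cross coefficients even. -/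
theorem improperly_primitive_invariants
    (g : TernaryQF) (hprim : g.Primitive) (hpd : g.PosDef)
    (hodd : Odd g.r ∨ Odd g.s ∨ Odd g.t) :
    g.I₁ < 0 ∧ Odd g.I₁ ∧ (16 : ℤ) ∣ g.I₂ ∧
      g.FB.Primitive ∧ Even g.FB.r ∧ Even g.FB.s ∧ Even g.FB.t :=
  improperly_primitive_invariants_general g hodd
end

section
/- Let f be a primitive integral ternary quadratic form and n ≥ 1 an integer. Then there exist integers x, y, z with gcd(x,y,z) = 1 such that gcd(f(x,y,z), n) = 1. -/
theorem Int.ModEq.isCoprime_iff {n a b : ℤ} (h : a ≡ b [ZMOD n]) :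
    IsCoprime a n ↔ IsCoprime b n := by
  rw [Int.isCoprime_iff_gcd_eq_one, Int.isCoprime_iff_gcd_eq_one, ← Int.gcd_emod a,
    ← Int.gcd_emod b, h]

theorem Int.exists_eq_mul_primitive_triple (x y z : ℤ) :
    ∃ d x' y' z' : ℤ, Int.gcd (Int.gcd x' y') z' = 1 ∧ x = d * x' ∧ y = d * y' ∧ z = d * z' := by
  set d := Int.gcd (Int.gcd x y) z with hd
  rcases Nat.eq_zero_or_pos d with hd0 | hd0
  · obtain ⟨hxy, rfl⟩ := Int.gcd_eq_zero_iff.mp hd0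
    obtain ⟨rfl, rfl⟩ := Int.gcd_eq_zero_iff.mp (Int.natCast_eq_zero.mp hxy)
    exact ⟨0, 1, 0, 0, by simp, by simp, by simp, by simp⟩
  have hdxy : (d : ℤ) ∣ Int.gcd x y := Int.gcd_dvd_left _ _
  have hdz : (d : ℤ) ∣ z := Int.gcd_dvd_right _ _
  have hdx : (d : ℤ) ∣ x := hdxy.trans (Int.gcd_dvd_left _ _)
  have hdy : (d : ℤ) ∣ y := hdxy.trans (Int.gcd_dvd_right _ _)
  refine ⟨d, x / d, y / d, z / d, ?_, (Int.mul_ediv_cancel' hdx).symm,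
    (Int.mul_ediv_cancel' hdy).symm, (Int.mul_ediv_cancel' hdz).symm⟩
  rw [Int.gcd_ediv hdx hdy, Int.natAbs_natCast, Int.natCast_div, Int.gcd_ediv hdxy hdz,
    Int.natAbs_natCast, ← hd, Nat.div_self hd0]

namespace TernaryQF

variable (f : TernaryQF)

theorem eval_mul (d x y z : ℤ) : f.eval (d * x) (d * y) (d * z) = d ^ 2 * f.eval x y z := by
  unfold eval
  ring

theorem eval_modEq {n x x' y y' z z' : ℤ} (hx : x ≡ x' [ZMOD n]) (hy : y ≡ y' [ZMOD n])
    (hz : z ≡ z' [ZMOD n]) : f.eval x y z ≡ f.eval x' y' z' [ZMOD n] := by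
  unfold eval
  gcongr

theorem isCoprime_eval_mul_add {a b x y z : ℤ} (hba : IsCoprime b a)
    (hf : IsCoprime (f.eval x y z) a) (x' y' z' : ℤ) :
    IsCoprime (f.eval (b * x + a * x') (b * y + a * y') (b * z + a * z')) a := by
  have hmod : ∀ u u' : ℤ, b * u + a * u' ≡ b * u [ZMOD a] := fun u u' ↦
    Int.add_mul_emod_self_left _ _ _
  rw [(f.eval_modEq (hmod x x') (hmod y y') (hmod z z')).isCoprime_iff, eval_mul]
  exact hba.pow_left.mul_left hf

theorem exists_isCoprime_eval_mul {a b : ℤ} (hab : IsCoprime a b)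
    (ha : ∃ x y z, IsCoprime (f.eval x y z) a) (hb : ∃ x y z, IsCoprime (f.eval x y z) b) :
    ∃ x y z, IsCoprime (f.eval x y z) (a * b) := by
  obtain ⟨x, y, z, hxa⟩ := ha
  obtain ⟨x', y', z', hxb⟩ := hb
  refine ⟨b * x + a * x', b * y + a * y', b * z + a * z', IsCoprime.mul_right ?_ ?_⟩
  · exact f.isCoprime_eval_mul_add hab.symm hxa x' y' z'
  · simpa only [add_comm] using f.isCoprime_eval_mul_add hab hxb x y z

theorem dvd_content_of_forall_dvd_eval {d : ℤ} (h : ∀ x y z, d ∣ f.eval x y z) :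
    d ∣ f.content := by
  have ha : d ∣ f.a := by simpa [eval] using h 1 0 0
  have hb : d ∣ f.b := by simpa [eval] using h 0 1 0
  have hc : d ∣ f.c := by simpa [eval] using h 0 0 1
  have hr : d ∣ f.r := (dvd_add_right (hb.add hc)).mp (by simpa [eval] using h 0 1 1)
  have hs : d ∣ f.s := (dvd_add_right (ha.add hc)).mp (by simpa [eval] using h 1 0 1)
  have ht : d ∣ f.t := (dvd_add_right (ha.add hb)).mp (by simpa [eval] using h 1 1 0)
  exact Int.dvd_coe_gcd (Int.dvd_coe_gcd (Int.dvd_coe_gcd (Int.dvd_coe_gcd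
    (Int.dvd_coe_gcd ha hb) hc) hr) hs) ht

variable {f}

theorem exists_not_dvd_eval (hf : f.Primitive) {p : ℤ} (hp : ¬IsUnit p) :
    ∃ x y z, ¬p ∣ f.eval x y z := by
  by_contra! h
  exact hp (isUnit_of_dvd_one (hf ▸ f.dvd_content_of_forall_dvd_eval h))

theorem exists_isCoprime_eval_prime_pow (hf : f.Primitive) {p : ℤ}
    (hp : Prime p) (k : ℕ) : ∃ x y z, IsCoprime (f.eval x y z) (p ^ k) := by
  obtain ⟨x, y, z, hpf⟩ := exists_not_dvd_eval hf hp.not_isUnit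
  exact ⟨x, y, z, ((hp.coprime_iff_not_dvd.mpr hpf).symm).pow_right⟩

theorem exists_isCoprime_eval (hf : f.Primitive) {n : ℕ} (hn : n ≠ 0) :
    ∃ x y z, IsCoprime (f.eval x y z) n := by
  induction n using Nat.recOnPrimeCoprime with
  | zero => exact absurd rfl hn
  | prime_pow p k hp =>
    rw [Nat.cast_pow]
    exact exists_isCoprime_eval_prime_pow hf (Nat.prime_iff_prime_int.mp hp) k
  | coprime a b _ _ hab iha ihb =>
    rw [Nat.cast_mul]
    exact f.exists_isCoprime_eval_mul (Nat.isCoprime_iff_coprime.mpr hab)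
      (iha (by positivity)) (ihb (by positivity))

end TernaryQF

/-- For a primitive ternary quadratic form `f` and an integer `n ≥ 1`, there are
integers `x, y, z` with `gcd(x,y,z) = 1` such that `gcd(f(x,y,z), n) = 1`. -/
theorem primitive_ternary_represents_coprime
    (f : TernaryQF) (hprim : f.Primitive) (n : ℕ) (hn : 1 ≤ n) :
    ∃ x y z : ℤ, Int.gcd (Int.gcd x y) z = 1 ∧
      Int.gcd (f.eval x y z) (n : ℤ) = 1 := by
  obtain ⟨x, y, z, hco⟩ := TernaryQF.exists_isCoprime_eval hprim (n := n) (by omega)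
  obtain ⟨d, x, y, z, hxyz, rfl, rfl, rfl⟩ := Int.exists_eq_mul_primitive_triple x y z
  rw [f.eval_mul] at hco
  exact ⟨x, y, z, hxyz, Int.isCoprime_iff_gcd_eq_one.mp hco.of_mul_left_right⟩
end

section
/- Let d ≥ 1 be an integer and let s = (n, m, k) be a triple of integers with n > 0, m > 0 and nm − k²d = 1. Then the binary quadratic form q_s(x,y) = n²x² + 2kd(nm+2)xy + m²d(nm+3)y² is a positive definite integral binary quadratic form of discriminant −16d. -/
/-- An integral binary quadratic form `[a,b,c]`, denoting `a*x² + b*x*y + c*y²`. -/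
structure BinaryQF where
  a : ℤ
  b : ℤ
  c : ℤ

namespace BinaryQF

def eval (q : BinaryQF) (x y : ℤ) : ℤ := q.a * x ^ 2 + q.b * x * y + q.c * y ^ 2

def disc (q : BinaryQF) : ℤ := q.b ^ 2 - 4 * q.a * q.c

def PosDef (q : BinaryQF) : Prop := 0 < q.a ∧ q.disc < 0

end BinaryQF

namespace BinaryQF

def qs (d n m k : ℤ) : BinaryQF := ⟨n ^ 2, 2 * k * d * (n * m + 2), m ^ 2 * d * (n * m + 3)⟩

/- With `t = nm` this is the polynomial identity `t²(t + 3) = (t - 1)(t + 2)² + 4`. -/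
theorem disc_qs (d n m k : ℤ) :
    (qs d n m k).disc = 4 * d * (n * m + 2) ^ 2 * (1 - (n * m - k ^ 2 * d)) - 16 * d := by
  unfold qs disc
  ring

theorem disc_qs_of_eq_one {d n m k : ℤ} (hs : n * m - k ^ 2 * d = 1) :
    (qs d n m k).disc = -16 * d := by
  rw [disc_qs, hs]
  ring

theorem posDef_qs {d n m k : ℤ} (hd : 0 < d) (hn : 0 < n) (hs : n * m - k ^ 2 * d = 1) :
    (qs d n m k).PosDef :=
  ⟨pow_pos hn 2, by rw [disc_qs_of_eq_one hs]; linarith⟩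

end BinaryQF

theorem qs_posdef_disc_general
    (d n m k : ℤ) (hd : 1 ≤ d) (hn : 0 < n)
    (hs : n * m - k ^ 2 * d = 1) :
    BinaryQF.PosDef ⟨n ^ 2, 2 * k * d * (n * m + 2), m ^ 2 * d * (n * m + 3)⟩ ∧
      BinaryQF.disc ⟨n ^ 2, 2 * k * d * (n * m + 2), m ^ 2 * d * (n * m + 3)⟩
        = -16 * d :=
  ⟨BinaryQF.posDef_qs hd hn hs, BinaryQF.disc_qs_of_eq_one hs⟩

/-- For `d ≥ 1` and a triple `s = (n,m,k)` with `n, m > 0` and `nm - k²d = 1`, the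
form `q_s(x,y) = n²x² + 2kd(nm+2)xy + m²d(nm+3)y²` is a positive definite integral
binary quadratic form of discriminant `-16d`. -/
theorem qs_posdef_disc
    (d n m k : ℤ) (hd : 1 ≤ d) (hn : 0 < n) (hm : 0 < m)
    (hs : n * m - k ^ 2 * d = 1) :
    BinaryQF.PosDef ⟨n ^ 2, 2 * k * d * (n * m + 2), m ^ 2 * d * (n * m + 3)⟩ ∧
      BinaryQF.disc ⟨n ^ 2, 2 * k * d * (n * m + 2), m ^ 2 * d * (n * m + 3)⟩
        = -16 * d :=
  qs_posdef_disc_general d n m k hd hn hs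
end
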